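/- arXiv:2011.04468 — 2 statements merged into one kernel-verified Lean document; each statement's English description precedes it below -/
import Mathlib

section
/- (Projection on the support set, optimality for ℓ_p) Let T ⊆ {1,…,n} be nonempty and x|_T be the principal solution restricted to T (equal to x̂ on T and -∞ off T). Then for every x ∈ ℝ_max^n with supp(x) = T and A ⊞ x ≤ b, we have ‖b - A ⊞ x|_T‖_p^p ≤ ‖b - A ⊞ x‖_p^p, i.e., Σ_i (b_i - [A ⊞ x|_T]_i)^p ≤ Σ_i (b_i - [A ⊞ x]_i)^p for any fixed p ≥ 1. -/
/-- Max-plus matrix-vector product over `ℝ_max = WithBot ℝ`: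
`[A ⊞ x]_i = max_k (a_{ik} + x_k)` with `a + (-∞) = -∞`. -/
noncomputable def maxPlus {m n : ℕ} (A : Fin m → Fin n → ℝ) (x : Fin n → WithBot ℝ)
    (i : Fin m) : WithBot ℝ :=
  Finset.univ.sup fun k => (A i k : WithBot ℝ) + x k

/-- The principal solution `x̂_j = min_i (b_i - a_{ij})`. -/
noncomputable def principalSol {m n : ℕ} (A : Fin (m + 1) → Fin n → ℝ)
    (b : Fin (m + 1) → ℝ) (j : Fin n) : ℝ :=
  Finset.univ.inf' Finset.univ_nonempty fun i => b i - A i j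

/-!
Every subsolution `x` of `A ⊞ x ≤ b` supported on `T` lies below `x|_T`, which is itself a
subsolution with the same support. By monotonicity of `⊞`, each residual of `x|_T` is nonnegative
and at most the corresponding residual of `x`; since `t ↦ t ^ p` is monotone on `[0, ∞)`, the
inequality holds termwise.
-/

section MaxPlus

variable {m n : ℕ}

theorem maxPlus_le_iff (A : Fin m → Fin n → ℝ) (x : Fin n → WithBot ℝ) (i : Fin m)
    (c : WithBot ℝ) : maxPlus A x i ≤ c ↔ ∀ k, (A i k : WithBot ℝ) + x k ≤ c := by
  simp [maxPlus, Finset.sup_le_iff]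

theorem maxPlus_eq_bot_iff (A : Fin m → Fin n → ℝ) (x : Fin n → WithBot ℝ) (i : Fin m) :
    maxPlus A x i = ⊥ ↔ ∀ k, x k = ⊥ := by
  simp [maxPlus, Finset.sup_eq_bot_iff, WithBot.add_eq_bot]

theorem maxPlus_mono (A : Fin m → Fin n → ℝ) {x y : Fin n → WithBot ℝ} (hxy : x ≤ y) :
    maxPlus A x ≤ maxPlus A y := fun _ =>
  Finset.sup_mono_fun fun k _ => add_le_add_right (hxy k) _

theorem le_principalSol_iff (A : Fin (m + 1) → Fin n → ℝ) (b : Fin (m + 1) → ℝ) (j : Fin n)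
    (r : ℝ) : r ≤ principalSol A b j ↔ ∀ i, A i j + r ≤ b i := by
  simp only [principalSol, Finset.le_inf'_iff, Finset.mem_univ, true_implies, le_sub_iff_add_le']

/-- The principal solution restricted to `T`, i.e. `x|_T`. -/
noncomputable def principalSolOn (A : Fin (m + 1) → Fin n → ℝ) (b : Fin (m + 1) → ℝ)
    (T : Finset (Fin n)) (j : Fin n) : WithBot ℝ :=
  if j ∈ T then ((principalSol A b j : ℝ) : WithBot ℝ) else ⊥

variable (A : Fin (m + 1) → Fin n → ℝ) (b : Fin (m + 1) → ℝ) (T : Finset (Fin n))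

theorem principalSolOn_eq_bot_iff (j : Fin n) : principalSolOn A b T j = ⊥ ↔ j ∉ T := by
  by_cases hj : j ∈ T <;> simp [principalSolOn, hj]

theorem maxPlus_principalSolOn_le (i : Fin (m + 1)) :
    maxPlus A (principalSolOn A b T) i ≤ (b i : WithBot ℝ) := by
  refine (maxPlus_le_iff _ _ _ _).2 fun k => ?_
  by_cases hk : k ∈ T
  · simp only [principalSolOn, if_pos hk]
    exact_mod_cast (le_principalSol_iff A b k _).1 le_rfl i
  · simp [principalSolOn, hk]

theorem le_principalSolOn {x : Fin n → WithBot ℝ} (hsupp : ∀ j, x j ≠ ⊥ → j ∈ T)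
    (hsub : ∀ i, maxPlus A x i ≤ (b i : WithBot ℝ)) : x ≤ principalSolOn A b T := by
  intro j
  induction hxj : x j using WithBot.recBotCoe with
  | bot => exact bot_le
  | coe r =>
    have hj : j ∈ T := hsupp j (by simp [hxj])
    simp only [principalSolOn, if_pos hj, WithBot.coe_le_coe, le_principalSol_iff]
    intro i
    have := (maxPlus_le_iff A x i _).1 (hsub i) j
    rw [hxj] at this
    exact_mod_cast this

end MaxPlus

/-- `unbotD 0` turns a residual against `⊥` into `b - 0`, not `+∞`. -/
theorem rpow_sub_unbotD_le {a c : WithBot ℝ} {b p : ℝ} (hp : 0 ≤ p) (hac : a ≤ c)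
    (hcb : c ≤ (b : WithBot ℝ)) (hbot : a = ⊥ → c = ⊥) :
    (b - c.unbotD 0) ^ p ≤ (b - a.unbotD 0) ^ p := by
  induction a using WithBot.recBotCoe with
  | bot => rw [hbot rfl]
  | coe u =>
    induction c using WithBot.recBotCoe with
    | bot => exact absurd hac (by simp)
    | coe v =>
      simp only [WithBot.coe_le_coe, WithBot.unbotD_coe] at hac hcb ⊢
      exact Real.rpow_le_rpow (by linarith) (by linarith) hp

theorem projection_optimal_lp_general (m n : ℕ) (A : Fin (m + 1) → Fin (n + 1) → ℝ)
    (b : Fin (m + 1) → ℝ) (p : ℝ) (hp : 1 ≤ p)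
    (T : Finset (Fin (n + 1)))
    (x : Fin (n + 1) → WithBot ℝ)
    (hsupp : {j | x j ≠ ⊥} = (T : Set (Fin (n + 1))))
    (hsub : ∀ i, maxPlus A x i ≤ (b i : WithBot ℝ)) :
    ∑ i, (b i - (maxPlus A
        (fun j => if j ∈ T then ((principalSol A b j : ℝ) : WithBot ℝ) else ⊥) i).unbotD 0) ^ p
      ≤ ∑ i, (b i - (maxPlus A x i).unbotD 0) ^ p := by
  have hx : ∀ j, x j ≠ ⊥ ↔ j ∈ T := fun j => Set.ext_iff.1 hsupp j
  have hle : x ≤ principalSolOn A b T := le_principalSolOn A b T (fun j => (hx j).1) hsub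
  have hsame_supp : ∀ k, x k = ⊥ → principalSolOn A b T k = ⊥ := fun k hk =>
    (principalSolOn_eq_bot_iff A b T k).2 fun hkT => (hx k).2 hkT hk
  refine Finset.sum_le_sum fun i _ => rpow_sub_unbotD_le (by linarith) (maxPlus_mono A hle i)
    (maxPlus_principalSolOn_le A b T i) fun hbot => ?_
  exact (maxPlus_eq_bot_iff _ _ _).2 fun k => hsame_supp k ((maxPlus_eq_bot_iff _ _ _).1 hbot k)

/-- Projection on the support set: optimality for the ℓ_p error. -/
theorem projection_optimal_lp (m n : ℕ) (A : Fin (m + 1) → Fin (n + 1) → ℝ)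
    (b : Fin (m + 1) → ℝ) (p : ℝ) (hp : 1 ≤ p)
    (T : Finset (Fin (n + 1))) (hT : T.Nonempty)
    (x : Fin (n + 1) → WithBot ℝ)
    (hsupp : {j | x j ≠ ⊥} = (T : Set (Fin (n + 1))))
    (hsub : ∀ i, maxPlus A x i ≤ (b i : WithBot ℝ)) :
    ∑ i, (b i - (maxPlus A
        (fun j => if j ∈ T then ((principalSol A b j : ℝ) : WithBot ℝ) else ⊥) i).unbotD 0) ^ p
      ≤ ∑ i, (b i - (maxPlus A x i).unbotD 0) ^ p :=
  projection_optimal_lp_general m n A b p hp T x hsupp hsub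
end

section
/- If an optimal solution x_OPT of the sparse max-plus problem (minimize |supp(x)| subject to ‖b - A⊞x‖_p^p ≤ ε and A⊞x ≤ b) exists, then the vector z defined by z_j = x̂_j for j ∈ supp(x_OPT) and z_j = -∞ otherwise is also an optimal solution. -/
/-!
The principal solution is the largest solution of `A ⊞ x ≤ b` (residuation). Hence `z`, the
principal solution cut down to `supp x_OPT`, still satisfies `A ⊞ z ≤ b` and lies above `x_OPT`.
Since `A ⊞ ·` is monotone, `A ⊞ z` is squeezed between `A ⊞ x_OPT` and `b`, so every residual
`b_i - [A ⊞ z]_i` is at most the corresponding one of `x_OPT`; and `z` has the same support.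
-/

section MaxPlus

variable {m n : ℕ}

theorem coe_add_le_coe_iff (a c : ℝ) (w : WithBot ℝ) :
    (a : WithBot ℝ) + w ≤ c ↔ w ≤ ((c - a : ℝ) : WithBot ℝ) := by
  induction w using WithBot.recBotCoe with
  | bot => simp
  | coe t =>
    rw [← WithBot.coe_add, WithBot.coe_le_coe, WithBot.coe_le_coe]
    constructor <;> intro h <;> linarith

theorem maxPlus_mono_s6 (A : Fin m → Fin n → ℝ) (i : Fin m) :
    Monotone fun x => maxPlus A x i :=
  fun _ _ hxy => Finset.sup_mono_fun fun k _ => add_le_add_right (hxy k) _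

theorem le_coe_principalSol_iff (A : Fin (m + 1) → Fin n → ℝ) (b : Fin (m + 1) → ℝ)
    (j : Fin n) (w : WithBot ℝ) :
    w ≤ principalSol A b j ↔ ∀ i, w ≤ ((b i - A i j : ℝ) : WithBot ℝ) := by
  induction w using WithBot.recBotCoe with
  | bot => simp
  | coe t => simp [principalSol, Finset.le_inf'_iff]

theorem maxPlus_le_iff_le_principalSol (A : Fin (m + 1) → Fin n → ℝ) (b : Fin (m + 1) → ℝ)
    (x : Fin n → WithBot ℝ) :
    (∀ i, maxPlus A x i ≤ b i) ↔ ∀ j, x j ≤ principalSol A b j := by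
  simp only [maxPlus_le_iff, coe_add_le_coe_iff, le_coe_principalSol_iff]
  exact forall_comm

end MaxPlus

section SparseProblem

variable {m n : ℕ}

/-- A row with `[A ⊞ x]_i = -∞` contributes `b_i ^ p` to the error, through the junk value
`unbotD 0 ⊥ = 0`. -/
def SparseFeasible (A : Fin m → Fin n → ℝ) (b : Fin m → ℝ) (p ε : ℝ)
    (x : Fin n → WithBot ℝ) : Prop :=
  (∀ i, maxPlus A x i ≤ (b i : WithBot ℝ)) ∧
    ∑ i, (b i - WithBot.unbotD 0 (maxPlus A x i)) ^ p ≤ ε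

theorem rpow_sub_unbotD_le_s6 {p c : ℝ} (hp : 0 ≤ p) {u v : WithBot ℝ} (huv : u ≤ v)
    (hvc : v ≤ c) (hbot : u = ⊥ → v = ⊥) :
    (c - v.unbotD 0) ^ p ≤ (c - u.unbotD 0) ^ p := by
  induction u using WithBot.recBotCoe with
  | bot => rw [hbot rfl]
  | coe s =>
    lift v to ℝ using ne_bot_of_le_ne_bot WithBot.coe_ne_bot huv
    rw [WithBot.coe_le_coe] at huv hvc
    simp only [WithBot.unbotD_coe]
    exact Real.rpow_le_rpow (by linarith) (by linarith) hp

theorem SparseFeasible.of_le {A : Fin m → Fin n → ℝ} {b : Fin m → ℝ} {p ε : ℝ}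
    {x y : Fin n → WithBot ℝ} (hx : SparseFeasible A b p ε x) (hp : 0 ≤ p) (hxy : x ≤ y)
    (hyb : ∀ i, maxPlus A y i ≤ b i) (hsupp : ∀ k, x k = ⊥ → y k = ⊥) :
    SparseFeasible A b p ε y := by
  refine ⟨hyb, le_trans (Finset.sum_le_sum fun i _ => ?_) hx.2⟩
  refine rpow_sub_unbotD_le_s6 hp (maxPlus_mono_s6 A i hxy) (hyb i) fun hxi => ?_
  rw [maxPlus_eq_bot_iff] at hxi ⊢
  exact fun k => hsupp k (hxi k)

end SparseProblem

section PrincipalOn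

variable {m n : ℕ}

noncomputable def principalOn (A : Fin (m + 1) → Fin n → ℝ) (b : Fin (m + 1) → ℝ)
    (x : Fin n → WithBot ℝ) (j : Fin n) : WithBot ℝ :=
  if x j ≠ ⊥ then ((principalSol A b j : ℝ) : WithBot ℝ) else ⊥

variable (A : Fin (m + 1) → Fin n → ℝ) (b : Fin (m + 1) → ℝ) (x : Fin n → WithBot ℝ)

theorem principalOn_eq_bot_iff (j : Fin n) : principalOn A b x j = ⊥ ↔ x j = ⊥ := by
  by_cases h : x j = ⊥ <;> simp [principalOn, h]

theorem principalOn_le_principalSol (j : Fin n) : principalOn A b x j ≤ principalSol A b j := by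
  unfold principalOn
  split_ifs <;> simp

theorem le_principalOn (hx : ∀ i, maxPlus A x i ≤ b i) : x ≤ principalOn A b x := by
  intro j
  by_cases h : x j = ⊥
  · simp [h]
  · simpa [principalOn, h] using (maxPlus_le_iff_le_principalSol A b x).1 hx j

theorem maxPlus_principalOn_le (i : Fin (m + 1)) : maxPlus A (principalOn A b x) i ≤ b i :=
  (maxPlus_le_iff_le_principalSol A b _).2 (principalOn_le_principalSol A b x) i

theorem ncard_support_principalOn :
    {j | principalOn A b x j ≠ ⊥}.ncard = {j | x j ≠ ⊥}.ncard := by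
  simp only [ne_eq, principalOn_eq_bot_iff]

end PrincipalOn

theorem principal_values_optimal_general (m n : ℕ) (A : Fin (m + 1) → Fin (n + 1) → ℝ)
    (b : Fin (m + 1) → ℝ) (p : ℝ) (hp : 1 ≤ p) (ε : ℝ)
    (xOPT : Fin (n + 1) → WithBot ℝ)
    (hfeas : (∀ i, maxPlus A xOPT i ≤ (b i : WithBot ℝ)) ∧
      ∑ i, (b i - WithBot.unbotD 0 (maxPlus A xOPT i)) ^ p ≤ ε)
    (hopt : ∀ y : Fin (n + 1) → WithBot ℝ,
      ((∀ i, maxPlus A y i ≤ (b i : WithBot ℝ)) ∧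
        ∑ i, (b i - WithBot.unbotD 0 (maxPlus A y i)) ^ p ≤ ε) →
      Set.ncard {j | xOPT j ≠ ⊥} ≤ Set.ncard {j | y j ≠ ⊥}) :
    ((∀ i, maxPlus A
        (fun j => if xOPT j ≠ ⊥ then ((principalSol A b j : ℝ) : WithBot ℝ) else ⊥) i
        ≤ (b i : WithBot ℝ)) ∧
      ∑ i, (b i - WithBot.unbotD 0 (maxPlus A
        (fun j => if xOPT j ≠ ⊥ then ((principalSol A b j : ℝ) : WithBot ℝ) else ⊥) i)) ^ p
        ≤ ε) ∧
    ∀ y : Fin (n + 1) → WithBot ℝ,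
      ((∀ i, maxPlus A y i ≤ (b i : WithBot ℝ)) ∧
        ∑ i, (b i - WithBot.unbotD 0 (maxPlus A y i)) ^ p ≤ ε) →
      Set.ncard {j | (fun j => if xOPT j ≠ ⊥ then ((principalSol A b j : ℝ) : WithBot ℝ) else ⊥) j ≠ ⊥}
        ≤ Set.ncard {j | y j ≠ ⊥} := by
  have hz : SparseFeasible A b p ε (principalOn A b xOPT) :=
    SparseFeasible.of_le hfeas (by linarith) (le_principalOn A b xOPT hfeas.1)
      (maxPlus_principalOn_le A b xOPT) fun j => (principalOn_eq_bot_iff A b xOPT j).2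
  exact ⟨hz, fun y hy => (ncard_support_principalOn A b xOPT).trans_le (hopt y hy)⟩

/-- If `x_OPT` is an optimal solution of the sparse problem, then replacing its
finite values by those of the principal solution gives another optimal solution. -/
theorem principal_values_optimal (m n : ℕ) (A : Fin (m + 1) → Fin (n + 1) → ℝ)
    (b : Fin (m + 1) → ℝ) (p : ℝ) (hp : 1 ≤ p) (ε : ℝ) (hε : 0 ≤ ε)
    (xOPT : Fin (n + 1) → WithBot ℝ)
    (hfeas : (∀ i, maxPlus A xOPT i ≤ (b i : WithBot ℝ)) ∧
      ∑ i, (b i - WithBot.unbotD 0 (maxPlus A xOPT i)) ^ p ≤ ε)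
    (hopt : ∀ y : Fin (n + 1) → WithBot ℝ,
      ((∀ i, maxPlus A y i ≤ (b i : WithBot ℝ)) ∧
        ∑ i, (b i - WithBot.unbotD 0 (maxPlus A y i)) ^ p ≤ ε) →
      Set.ncard {j | xOPT j ≠ ⊥} ≤ Set.ncard {j | y j ≠ ⊥}) :
    ((∀ i, maxPlus A
        (fun j => if xOPT j ≠ ⊥ then ((principalSol A b j : ℝ) : WithBot ℝ) else ⊥) i
        ≤ (b i : WithBot ℝ)) ∧
      ∑ i, (b i - WithBot.unbotD 0 (maxPlus A
        (fun j => if xOPT j ≠ ⊥ then ((principalSol A b j : ℝ) : WithBot ℝ) else ⊥) i)) ^ p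
        ≤ ε) ∧
    ∀ y : Fin (n + 1) → WithBot ℝ,
      ((∀ i, maxPlus A y i ≤ (b i : WithBot ℝ)) ∧
        ∑ i, (b i - WithBot.unbotD 0 (maxPlus A y i)) ^ p ≤ ε) →
      Set.ncard {j | (fun j => if xOPT j ≠ ⊥ then ((principalSol A b j : ℝ) : WithBot ℝ) else ⊥) j ≠ ⊥}
        ≤ Set.ncard {j | y j ≠ ⊥} :=
  principal_values_optimal_general m n A b p hp ε xOPT hfeas hopt
end
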